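/- Let m, ℓ be nonnegative integers with ℓ ≤ m and let y be a real number such that 2y ∉ {0, 1, …, 2ℓ}. Then σ_{m,ℓ}(y) = (2(−1)^ℓ / ⟨2y⟩_{1+2ℓ}) · Σ_{i=0}^{ℓ} C(2y, i) · C(2ℓ−2y, ℓ−i) · (y−i)^{1+2m}, where C(t, i) = ⟨t⟩_i / i! denotes the generalized binomial coefficient. -/

import Mathlib

/-!
The numbers `x_k = (y - k)^2`, `0 ≤ k ≤ ℓ`, are pairwise distinct, and `σ_{m,ℓ}(y)` is the
complete homogeneous symmetric polynomial `h_{m-ℓ}(x_0, …, x_ℓ)`. For distinct nodes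
`h_d(x_0, …, x_n) = ∑_j x_j^(d+n) / ∏_{k ≠ j} (x_j - x_k)`: both sides satisfy
`h_{d+1}(x_0, …, x_n) = h_{d+1}(x_0, …, x_{n-1}) + x_n h_d(x_0, …, x_n)`, and for `d = 0`
the right side is the leading coefficient of the Lagrange interpolant of `X^n`. Since
`x_j - x_k = (k - j)(2y - j - k)`, each denominator is a product of factorials and falling
factorials of `2y`, which combine with `⟨2y⟩_{1+2ℓ}` into the binomial coefficients
`C(2y, j)` and `C(2ℓ - 2y, ℓ - j)`.
-/

open Finset

/-- Falling factorial `⟨x⟩_n = x(x-1)⋯(x-n+1)`. -/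
noncomputable def ffact (x : ℝ) : ℕ → ℝ
  | 0 => 1
  | n + 1 => ffact x n * (x - n)

/-- `σ_{m,ℓ}(y)`: the complete homogeneous symmetric polynomial of degree `m - ℓ`
evaluated at `(y-0)^2, (y-1)^2, …, (y-ℓ)^2`, i.e. the sum over weakly increasing
sequences `0 ≤ k_1 ≤ ⋯ ≤ k_{m-ℓ} ≤ ℓ` of `∏ i, (y - k_i)^2`. -/
noncomputable def csigma (m ℓ : ℕ) (y : ℝ) : ℝ :=
  ∑ k ∈ Finset.univ.filter (fun k : Fin (m - ℓ) → Fin (ℓ + 1) => Monotone k),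
    ∏ i, (y - (k i : ℝ)) ^ 2

/-- Generalized binomial coefficient `C(t, i) = ⟨t⟩_i / i!`. -/
noncomputable def gbinom (t : ℝ) (i : ℕ) : ℝ := ffact t i / (Nat.factorial i)

section DividedDifference

variable {ι F : Type*} [Field F] [DecidableEq ι]

noncomputable def dividedDifferencePow (x : ι → F) (s : Finset ι) (p : ℕ) : F :=
  ∑ j ∈ s, x j ^ p / ∏ k ∈ s.erase j, (x j - x k)

theorem dividedDifferencePow_empty (x : ι → F) (p : ℕ) : dividedDifferencePow x ∅ p = 0 :=
  sum_empty

theorem dividedDifferencePow_eq_one {x : ι → F} {s : Finset ι} {n : ℕ} (hx : Set.InjOn x s)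
    (hs : #s = n + 1) : dividedDifferencePow x s n = 1 := by
  have h := Lagrange.leadingCoeff_eq_sum hx (P := Polynomial.X ^ n) (by simp [hs])
  simpa [dividedDifferencePow] using h.symm

/-- `x_j^(p+1) - x_b x_j^p = x_j^p (x_j - x_b)` vanishes at `j = b` and otherwise cancels the
factor `x_j - x_b` of the denominator. -/
theorem dividedDifferencePow_succ {x : ι → F} {s : Finset ι} {b : ι} (hx : Set.InjOn x s)
    (hb : b ∈ s) (p : ℕ) :
    dividedDifferencePow x s (p + 1) =
      dividedDifferencePow x (s.erase b) p + x b * dividedDifferencePow x s p := by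
  rw [← sub_eq_iff_eq_add, dividedDifferencePow, dividedDifferencePow, mul_sum,
    ← sum_sub_distrib, dividedDifferencePow, ← sum_erase (a := b) _ (by ring)]
  refine sum_congr rfl fun j hj => ?_
  obtain ⟨hjb, hjs⟩ := mem_erase.1 hj
  have hxjb : x j - x b ≠ 0 := sub_ne_zero.2 fun h => hjb (hx hjs hb h)
  rw [← mul_prod_erase _ _ (mem_erase.2 ⟨hjb.symm, hb⟩), erase_right_comm]
  field_simp
  ring

end DividedDifference

section CompleteHomogeneous

variable {R : Type*} [CommSemiring R]

/-- Monotone maps `Fin d → Fin n` enumerate the multisets of size `d` in `{0, …, n-1}`, so this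
is `h_d(x_0, …, x_{n-1})`. -/
noncomputable def completeHomogeneous (x : ℕ → R) (d n : ℕ) : R :=
  ∑ k ∈ univ.filter (fun k : Fin d → Fin n => Monotone k), ∏ i, x (k i)

theorem completeHomogeneous_zero_left (x : ℕ → R) (n : ℕ) :
    completeHomogeneous x 0 n = 1 := by
  simp [completeHomogeneous, Subsingleton.monotone]

theorem completeHomogeneous_succ_zero (x : ℕ → R) (d : ℕ) :
    completeHomogeneous x (d + 1) 0 = 0 := by
  simp [completeHomogeneous]

theorem monotone_snoc_last {d n : ℕ} {k : Fin d → Fin (n + 1)} (hk : Monotone k) :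
    Monotone (Fin.snoc (α := fun _ => Fin (n + 1)) k (Fin.last n)) := by
  intro a b hab
  induction b using Fin.lastCases with
  | last => simpa using Fin.le_last _
  | cast j =>
    induction a using Fin.lastCases with
    | last => exact absurd hab (not_le.2 (Fin.castSucc_lt_last j))
    | cast i => simpa using hk (Fin.castSucc_le_castSucc_iff.1 hab)

theorem sum_monotone_last_eq_last (x : ℕ → R) (d n : ℕ) :
    ∑ k ∈ univ.filter
        (fun k : Fin (d + 1) → Fin (n + 1) => Monotone k ∧ k (Fin.last d) = Fin.last n),
      ∏ i, x (k i) = x n * completeHomogeneous x d (n + 1) := by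
  rw [completeHomogeneous, mul_sum]
  refine sum_nbij' Fin.init (fun k => Fin.snoc k (Fin.last n)) ?_ ?_ ?_ ?_ ?_
  · simp only [mem_filter, mem_univ, true_and]
    exact fun k hk => hk.1.comp Fin.strictMono_castSucc.monotone
  · simp only [mem_filter, mem_univ, true_and]
    exact fun k hk => ⟨monotone_snoc_last hk, Fin.snoc_last _ _⟩
  · simp only [mem_filter, mem_univ, true_and]
    intro k hk
    rw [← hk.2, Fin.snoc_init_self]
  · exact fun k _ => Fin.init_snoc _ _
  · intro k hk
    rw [Fin.prod_univ_castSucc, (mem_filter.1 hk).2.2, mul_comm]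
    rfl

theorem sum_monotone_last_ne_last (x : ℕ → R) (d n : ℕ) :
    ∑ k ∈ univ.filter
        (fun k : Fin (d + 1) → Fin (n + 1) => Monotone k ∧ ¬k (Fin.last d) = Fin.last n),
      ∏ i, x (k i) = completeHomogeneous x (d + 1) n := by
  symm
  refine sum_bij (fun k _ => Fin.castSucc ∘ k) ?_ ?_ ?_ ?_
  · simp only [mem_filter, mem_univ, true_and]
    exact fun k hk => ⟨Fin.strictMono_castSucc.monotone.comp hk, (Fin.castSucc_lt_last _).ne⟩
  · exact fun k _ k' _ h => funext fun i => Fin.castSucc_injective _ (congrFun h i)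
  · simp only [mem_filter, mem_univ, true_and]
    intro k ⟨hk, hlast⟩
    have hne : ∀ i, k i ≠ Fin.last n := fun i h =>
      hlast (le_antisymm (Fin.le_last _) (h ▸ hk (Fin.le_last i)))
    refine ⟨fun i => (k i).castPred (hne i), fun i j hij => ?_, funext fun i => ?_⟩
    · exact Fin.castPred_le_castPred_iff.2 (hk hij)
    · exact Fin.castSucc_castPred _ _
  · exact fun k _ => rfl

theorem completeHomogeneous_succ_succ (x : ℕ → R) (d n : ℕ) :
    completeHomogeneous x (d + 1) (n + 1) =
      completeHomogeneous x (d + 1) n + x n * completeHomogeneous x d (n + 1) := by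
  rw [add_comm (completeHomogeneous x (d + 1) n), ← sum_monotone_last_ne_last x d n,
    ← sum_monotone_last_eq_last x d n]
  unfold completeHomogeneous
  rw [← sum_filter_add_sum_filter_not _
      (fun k : Fin (d + 1) → Fin (n + 1) => k (Fin.last d) = Fin.last n),
    filter_filter, filter_filter]

end CompleteHomogeneous

theorem completeHomogeneous_eq_dividedDifferencePow {F : Type*} [Field F] {x : ℕ → F}
    (d : ℕ) :
    ∀ {n : ℕ}, Set.InjOn x (range (n + 1)) →
      completeHomogeneous x d (n + 1) = dividedDifferencePow x (range (n + 1)) (d + n) := by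
  induction d with
  | zero =>
    intro n hx
    rw [completeHomogeneous_zero_left, zero_add, dividedDifferencePow_eq_one hx (card_range _)]
  | succ d ih =>
    intro n
    induction n with
    | zero =>
      intro hx
      rw [completeHomogeneous_succ_succ, completeHomogeneous_succ_zero, ih hx,
        dividedDifferencePow_succ hx (mem_range.2 zero_lt_one), range_one, erase_singleton,
        dividedDifferencePow_empty, add_zero, zero_add]
    | succ n ihn =>
      intro hx
      rw [completeHomogeneous_succ_succ, ihn (hx.mono (range_subset_range.2 (n + 1).le_succ)),
        ih hx,
        show d + 1 + (n + 1) = d + (n + 1) + 1 by ring,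
        dividedDifferencePow_succ hx (mem_range.2 (n + 1).lt_add_one)]
      congr 2
      · rw [range_add_one (n := n + 1), erase_insert notMem_range_self]
      · ring

theorem ffact_eq_eval_descPochhammer (x : ℝ) (n : ℕ) :
    ffact x n = (descPochhammer ℝ n).eval x := by
  induction n with
  | zero => simp [ffact]
  | succ n ih => rw [ffact, ih, descPochhammer_succ_eval]

theorem ffact_eq_prod (x : ℝ) (n : ℕ) : ffact x n = ∏ k ∈ range n, (x - k) := by
  rw [ffact_eq_eval_descPochhammer, descPochhammer_eval_eq_prod_range]

theorem ffact_one (x : ℝ) : ffact x 1 = x := by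
  simp [ffact]

theorem ffact_add (x : ℝ) (a b : ℕ) : ffact x (a + b) = ffact x a * ffact (x - a) b := by
  simp only [ffact_eq_eval_descPochhammer, ← descPochhammer_mul, Polynomial.eval_mul,
    Polynomial.eval_comp, Polynomial.eval_sub, Polynomial.eval_X, Polynomial.eval_natCast]

theorem ffact_natCast_self (n : ℕ) : ffact n n = n.factorial := by
  rw [ffact_eq_eval_descPochhammer, descPochhammer_eval_eq_descFactorial, Nat.descFactorial_self]

theorem ffact_eq_neg_one_pow_mul (x : ℝ) (n : ℕ) :
    ffact x n = (-1) ^ n * ffact (n - 1 - x) n := by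
  rw [ffact_eq_eval_descPochhammer, ffact_eq_eval_descPochhammer,
    descPochhammer_eval_eq_ascPochhammer, ← ascPochhammer_eval_neg_eq_descPochhammer]
  ring_nf

theorem ffact_ne_zero {x : ℝ} {n : ℕ} (h : ∀ k < n, x ≠ k) : ffact x n ≠ 0 := by
  rw [ffact_eq_prod, prod_ne_zero_iff]
  exact fun k hk => sub_ne_zero.2 (h k (mem_range.1 hk))

theorem prod_range_erase {M : Type*} [CommMonoid M] (f : ℕ → M) (j i : ℕ) :
    ∏ k ∈ (range (j + i + 1)).erase j, f k =
      (∏ k ∈ range j, f k) * ∏ k ∈ range i, f (j + 1 + k) := by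
  have hsplit : (range (j + i + 1)).erase j = range j ∪ Ico (j + 1) (j + i + 1) := by
    ext k
    simp only [mem_erase, mem_range, mem_union, mem_Ico]
    omega
  rw [hsplit, prod_union (disjoint_left.2 fun k hk hk' => by
      simp only [mem_range, mem_Ico] at hk hk'; omega),
    prod_Ico_eq_prod_range, show j + i + 1 - (j + 1) = i by omega]

theorem prod_erase_sq_sub_sq (y : ℝ) (j i : ℕ) :
    ∏ k ∈ (range (j + i + 1)).erase j, ((y - j) ^ 2 - (y - k) ^ 2) =
      (-1) ^ j * j.factorial * i.factorial * ffact (2 * y - j) j *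
        ffact (2 * y - 2 * j - 1) i := by
  have hlow : ∀ k ∈ range j, (y - j) ^ 2 - (y - k) ^ 2 = -1 * ((j - k) * (2 * y - j - k)) :=
    fun k _ => by ring
  have hhigh : ∀ k ∈ range i, (y - j) ^ 2 - (y - ((j + 1 + k : ℕ) : ℝ)) ^ 2 =
      ((k : ℝ) + 1) * (2 * y - 2 * j - 1 - k) :=
    fun k _ => by push_cast; ring
  rw [prod_range_erase, prod_congr rfl hlow, prod_congr rfl hhigh]
  simp only [prod_mul_distrib, prod_const, card_range, ← ffact_eq_prod, ffact_natCast_self]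
  have hfac : ∏ k ∈ range i, ((k : ℝ) + 1) = i.factorial := by
    exact_mod_cast prod_range_add_one_eq_factorial i
  rw [hfac]
  ring

theorem ffact_two_mul_split (y : ℝ) (j i : ℕ) :
    ffact (2 * y) (1 + 2 * (j + i)) =
      2 * (y - j) * ffact (2 * y) j * ffact (2 * y - j) j * ffact (2 * y - 2 * j - 1) i *
        ((-1) ^ i * ffact (2 * ((j + i : ℕ) : ℝ) - 2 * y) i) := by
  have hreflect : ffact (2 * y - 2 * j - 1 - i) i =
      (-1) ^ i * ffact (2 * ((j + i : ℕ) : ℝ) - 2 * y) i := by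
    rw [ffact_eq_neg_one_pow_mul]
    push_cast
    ring_nf
  rw [← hreflect, show 1 + 2 * (j + i) = j + j + 1 + i + i by ring]
  simp only [ffact_add, ffact_one]
  push_cast
  ring_nf

theorem pow_div_prod_erase_sq_sub_sq (y : ℝ) (j i m : ℕ)
    (hy : ffact (2 * y) (1 + 2 * (j + i)) ≠ 0) :
    ((y - j) ^ 2) ^ m / ∏ k ∈ (range (j + i + 1)).erase j, ((y - j) ^ 2 - (y - k) ^ 2) =
      2 * (-1) ^ (j + i) / ffact (2 * y) (1 + 2 * (j + i)) *
        (gbinom (2 * y) j * gbinom (2 * ((j + i : ℕ) : ℝ) - 2 * y) i *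
          (y - j) ^ (1 + 2 * m)) := by
  rw [ffact_two_mul_split] at hy ⊢
  simp only [mul_ne_zero_iff] at hy
  obtain ⟨⟨⟨⟨⟨-, hyj⟩, h₁⟩, h₂⟩, h₃⟩, -, h₄⟩ := hy
  rw [prod_erase_sq_sub_sq, gbinom, gbinom, ← pow_mul, pow_add, pow_add (y - j), pow_mul]
  generalize ffact (2 * y) j = A at h₁ ⊢
  generalize ffact (2 * y - j) j = B at h₂ ⊢
  generalize ffact (2 * y - 2 * j - 1) i = C at h₃ ⊢
  generalize ffact (2 * ((j + i : ℕ) : ℝ) - 2 * y) i = D at h₄ ⊢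
  have hsign : (-1 : ℝ) ^ j * (-1) ^ j = 1 := by rw [← mul_pow, neg_one_mul, neg_neg, one_pow]
  field_simp
  linear_combination -hsign

theorem injOn_sub_sq {y : ℝ} {ℓ : ℕ} (hy : ∀ j : ℕ, j ≤ 2 * ℓ → 2 * y ≠ j) :
    Set.InjOn (fun k : ℕ => (y - k) ^ 2) (range (ℓ + 1)) := by
  intro a ha b hb hab
  have hfactor : ((a : ℝ) - b) * (a + b - 2 * y) = 0 := by linear_combination hab
  rcases mul_eq_zero.1 hfactor with h | h
  · exact_mod_cast sub_eq_zero.1 h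
  · simp only [coe_range, Set.mem_Iio] at ha hb
    exact absurd (by push_cast; linarith) (hy (a + b) (by omega))

theorem csigma_explicit (m ℓ : ℕ) (hℓ : ℓ ≤ m) (y : ℝ)
    (hy : ∀ j : ℕ, j ≤ 2 * ℓ → 2 * y ≠ (j : ℝ)) :
    csigma m ℓ y =
      2 * (-1 : ℝ) ^ ℓ / ffact (2 * y) (1 + 2 * ℓ) *
        ∑ i ∈ Finset.range (ℓ + 1),
          gbinom (2 * y) i * gbinom (2 * (ℓ : ℝ) - 2 * y) (ℓ - i) *
            (y - (i : ℝ)) ^ (1 + 2 * m) := by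
  have hF : ffact (2 * y) (1 + 2 * ℓ) ≠ 0 := ffact_ne_zero fun k hk => hy k (by omega)
  have hσ : csigma m ℓ y = completeHomogeneous (fun k : ℕ => (y - k) ^ 2) (m - ℓ) (ℓ + 1) :=
    rfl
  rw [hσ, completeHomogeneous_eq_dividedDifferencePow _ (injOn_sub_sq hy), Nat.sub_add_cancel hℓ,
    dividedDifferencePow, mul_sum]
  refine sum_congr rfl fun j hj => ?_
  obtain ⟨i, rfl⟩ := Nat.exists_eq_add_of_le (mem_range_succ_iff.1 hj)
  rw [Nat.add_sub_cancel_left]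
  exact pow_div_prod_erase_sq_sub_sq y j i m hF
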